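/- If n > 9 is odd and composite, then |S(n)| ≤ φ(n)/4, where φ is Euler's totient function. -/

import Mathlib

/-- The odd part of `m`, i.e. `m` with all factors of 2 removed. -/
def oddPart (m : ℕ) : ℕ := ordCompl[2] m

/-- The set of strong liars for `n`. -/
def strongLiars (n : ℕ) : Set (ZMod n) :=
  {a | a ^ oddPart (n - 1) = 1 ∨
    ∃ i < (n - 1).factorization 2, a ^ (2 ^ i * oddPart (n - 1)) = -1}

/-- `|S(n)|`, the number of strong liars for `n`. -/
noncomputable def strongLiarCount (n : ℕ) : ℕ := Nat.card (strongLiars n)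


/-! The Chinese remainder theorem splits the number of solutions of `x ^ s = ±1` modulo `n`
into a product over the prime powers `p ^ e ∥ n`. Since `(ZMod (p ^ e))ˣ` is cyclic, each factor
is at most `gcd(s, p - 1)`, and `x ^ (2 ^ i * t) = -1` is not even solvable modulo `p` unless
`2 ^ (i + 1) ∣ p - 1`. With `t` the odd part of `n - 1`, `ω` the number of prime factors of `n`
and `ν` the least 2-adic valuation of the `p - 1`, summing over the strong-liar conditions gives
`|S(n)| ≤ (1 + ∑_{i < ν} 2 ^ (i * ω)) * ∏ gcd(t, p - 1)`, which is at most
`2 ^ (1 - ω) * ∏ 2 ^ ν * gcd(t, p - 1)`, and `2 ^ ν * gcd(t, p - 1)` divides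
`gcd(p - 1, n - 1)` because `n ≡ 1 (mod 2 ^ ν)`.

It remains to see `4 * ∏ gcd(p - 1, n - 1) ≤ 2 ^ (ω - 1) * φ(n)`, knowing that
`∏ (p - 1) ∣ φ(n)`. For `ω ≥ 3` this is immediate; for `ω = 1` it follows from
`p ^ (e - 1) ≥ 4`, which is where `n ≠ 9` enters; for `ω = 2` it can only fail if `n = p * q`
with `p - 1 ∣ n - 1` and `q - 1 ∣ n - 1`, and then `p - 1 ∣ q - 1 ∣ p - 1`. -/

open scoped Nat

theorem card_pow_eq_le_card_pow_eq_one {M : Type*} [CommMonoid M] [Finite M] {s : ℕ}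
    (hs : s ≠ 0) {c : M} (hc : IsUnit c) :
    Nat.card {x : M // x ^ s = c} ≤ Nat.card {x : M // x ^ s = 1} := by
  rcases isEmpty_or_nonempty {x : M // x ^ s = c} with h | ⟨⟨x₀, hx₀⟩⟩
  · simp
  obtain ⟨u, rfl⟩ : IsUnit x₀ := (isUnit_pow_iff hs).mp (hx₀ ▸ hc)
  refine Nat.card_le_card_of_injective (fun x => ⟨x.1 * ↑u⁻¹, by
    rw [mul_pow, x.2, ← hx₀, ← mul_pow, Units.mul_inv, one_pow]⟩) ?_
  intro x y hxy
  exact Subtype.ext ((Units.mul_left_inj u⁻¹).mp (congrArg Subtype.val hxy))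

theorem card_pow_eq_one_le_card_units {M : Type*} [Monoid M] [Finite M] {s : ℕ} (hs : s ≠ 0) :
    Nat.card {x : M // x ^ s = 1} ≤ Nat.card {u : Mˣ // u ^ s = 1} := by
  refine Nat.card_le_card_of_surjective (fun u => ⟨u.1, by rw [← Units.val_pow_eq_pow_val, u.2,
    Units.val_one]⟩) ?_
  rintro ⟨x, hx⟩
  exact ⟨⟨(IsUnit.of_pow_eq_one hx hs).unit, Units.ext (by simpa using hx)⟩, rfl⟩

theorem IsCyclic.card_pow_eq_one_le_gcd {G : Type*} [Group G] [Finite G] [IsCyclic G] (s : ℕ) :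
    Nat.card {u : G // u ^ s = 1} ≤ s.gcd (Nat.card G) := by
  classical
  have : Fintype G := Fintype.ofFinite G
  have hg : 0 < s.gcd (Nat.card G) := Nat.gcd_pos_of_pos_right _ Nat.card_pos
  calc Nat.card {u : G // u ^ s = 1}
      ≤ Nat.card {u : G // u ^ s.gcd (Nat.card G) = 1} :=
        Nat.card_mono (Set.toFinite _) fun u hu => pow_gcd_eq_one.mpr ⟨hu, pow_card_eq_one'⟩
    _ = (Finset.univ.filter fun u : G => u ^ s.gcd (Nat.card G) = 1).card := by
        rw [Nat.card_eq_fintype_card, Fintype.card_subtype]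
    _ ≤ s.gcd (Nat.card G) := IsCyclic.card_pow_eq_one_le hg

theorem two_pow_succ_dvd_of_pow_eq_neg_one {R : Type*} [Ring R] {x : R} {i t N : ℕ}
    (hR : (-1 : R) ≠ 1) (hx : x ^ (2 ^ i * t) = -1) (hN : x ^ N = 1) : 2 ^ (i + 1) ∣ N := by
  have hx' : (x ^ t) ^ 2 ^ i = -1 := by rw [← pow_mul, mul_comm, hx]
  have : orderOf (x ^ t) = 2 ^ (i + 1) := by
    have : Fact (Nat.Prime 2) := ⟨Nat.prime_two⟩
    refine orderOf_eq_prime_pow (by rwa [hx']) ?_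
    rw [pow_succ, pow_mul, hx', neg_one_sq]
  exact this ▸ (orderOf_pow_dvd t).trans (orderOf_dvd_of_pow_eq_one hN)

-- `c` is an integer so that the same right-hand side makes sense modulo every `n`.
noncomputable def powEqCount (n s : ℕ) (c : ℤ) : ℕ := Nat.card {x : ZMod n // x ^ s = c}

theorem card_pow_eq_intCast_of_ringEquiv_prod {R S T : Type*} [Ring R] [Ring S] [Ring T]
    (e : R ≃+* S × T) (s : ℕ) (c : ℤ) :
    Nat.card {x : R // x ^ s = c} =
      Nat.card {y : S // y ^ s = c} * Nat.card {z : T // z ^ s = c} := by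
  rw [← Nat.card_prod]
  refine Nat.card_congr ((e.toEquiv.subtypeEquiv fun x => ?_).trans Equiv.subtypeProdEquivProd)
  rw [← e.injective.eq_iff, map_pow, map_intCast, Prod.ext_iff]
  rfl

theorem powEqCount_mul {m n : ℕ} (h : m.Coprime n) (s : ℕ) (c : ℤ) :
    powEqCount (m * n) s c = powEqCount m s c * powEqCount n s c :=
  card_pow_eq_intCast_of_ringEquiv_prod (ZMod.chineseRemainder h) s c

theorem powEqCount_one (s : ℕ) (c : ℤ) : powEqCount 1 s c = 1 :=
  Nat.card_eq_one_iff_unique.mpr ⟨inferInstance, ⟨⟨0, Subsingleton.elim _ _⟩⟩⟩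

theorem powEqCount_eq_prod {n : ℕ} (hn : n ≠ 0) (s : ℕ) (c : ℤ) :
    powEqCount n s c = ∏ p ∈ n.primeFactors, powEqCount (p ^ n.factorization p) s c := by
  rw [Nat.multiplicative_factorization (powEqCount · s c) (fun _ _ h => powEqCount_mul h s c)
    (powEqCount_one s c) hn, Nat.prod_factorization_eq_prod_primeFactors]

theorem powEqCount_prime_pow_le {p e s : ℕ} {c : ℤ} (hp : p.Prime) (hp2 : p ≠ 2)
    (he : e ≠ 0) (hps : ¬ p ∣ s) (hc : IsUnit c) :
    powEqCount (p ^ e) s c ≤ s.gcd (p - 1) := by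
  have : Fact p.Prime := ⟨hp⟩
  have : IsCyclic (ZMod (p ^ e))ˣ := ZMod.isCyclic_units_of_prime_pow p hp hp2 e
  have hs : s ≠ 0 := by rintro rfl; exact hps (dvd_zero p)
  have hsp : (p ^ (e - 1)).Coprime s := (hp.coprime_iff_not_dvd.mpr hps).pow_left _
  calc powEqCount (p ^ e) s c
      ≤ Nat.card {x : ZMod (p ^ e) // x ^ s = 1} :=
        card_pow_eq_le_card_pow_eq_one hs (hc.map (Int.castRingHom _))
    _ ≤ Nat.card {u : (ZMod (p ^ e))ˣ // u ^ s = 1} := card_pow_eq_one_le_card_units hs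
    _ ≤ s.gcd (Nat.card (ZMod (p ^ e))ˣ) := IsCyclic.card_pow_eq_one_le_gcd s
    _ = s.gcd (p - 1) := by
        rw [Nat.card_eq_fintype_card, ZMod.card_units_eq_totient,
          Nat.totient_prime_pow hp (Nat.pos_of_ne_zero he), hsp.gcd_mul_left_cancel_right]

theorem powEqCount_le_prod_gcd {n s : ℕ} {c : ℤ} (hn : n ≠ 0) (hodd : Odd n)
    (hsn : s.Coprime n) (hc : IsUnit c) :
    powEqCount n s c ≤ ∏ p ∈ n.primeFactors, s.gcd (p - 1) := by
  rw [powEqCount_eq_prod hn]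
  refine Finset.prod_le_prod' fun p hp => ?_
  have hpn : p ∣ n := Nat.dvd_of_mem_primeFactors hp
  have hp' : p.Prime := Nat.prime_of_mem_primeFactors hp
  refine powEqCount_prime_pow_le hp' (hodd.ne_two_of_dvd_nat hpn)
    (hp'.factorization_pos_of_dvd hn hpn).ne' (fun hps => hp'.ne_one ?_) hc
  exact Nat.Coprime.eq_one_of_dvd (Nat.Coprime.of_dvd hps hpn hsn) dvd_rfl

theorem powEqCount_neg_one_eq_zero {n p i t : ℕ} (hp : p ∈ n.primeFactors) (hodd : Odd n)
    (h : ¬ 2 ^ (i + 1) ∣ p - 1) : powEqCount n (2 ^ i * t) (-1) = 0 := by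
  have hpn : p ∣ n := Nat.dvd_of_mem_primeFactors hp
  have hp' : p.Prime := Nat.prime_of_mem_primeFactors hp
  have : Fact p.Prime := ⟨hp'⟩
  have : Fact (2 < p) := ⟨lt_of_le_of_ne hp'.two_le (hodd.ne_two_of_dvd_nat hpn).symm⟩
  refine Nat.card_eq_zero.mpr (Or.inl ⟨fun ⟨x, hx⟩ => h ?_⟩)
  set y := ZMod.castHom hpn (ZMod p) x
  have hy : y ^ (2 ^ i * t) = -1 := by
    rw [← map_pow, hx, map_intCast, Int.cast_neg, Int.cast_one]
  have hy0 : y ≠ 0 := by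
    rintro hy0
    rcases eq_or_ne (2 ^ i * t) 0 with h0 | h0
    · rw [h0, pow_zero] at hy
      exact ZMod.neg_one_ne_one hy.symm
    · rw [hy0, zero_pow h0] at hy
      exact one_ne_zero (neg_eq_zero.mp hy.symm)
  exact two_pow_succ_dvd_of_pow_eq_neg_one ZMod.neg_one_ne_one hy
    (ZMod.pow_card_sub_one_eq_one hy0)

theorem powEqCount_eq_ncard (n s : ℕ) (c : ℤ) :
    powEqCount n s c = {x : ZMod n | x ^ s = c}.ncard :=
  Nat.card_coe_set_eq _

theorem strongLiarCount_le_sum (n : ℕ) [NeZero n] :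
    strongLiarCount n ≤ powEqCount n (oddPart (n - 1)) 1 +
      ∑ i ∈ Finset.range ((n - 1).factorization 2),
        powEqCount n (2 ^ i * oddPart (n - 1)) (-1) := by
  have hS : strongLiars n = {x | x ^ oddPart (n - 1) = 1} ∪
      ⋃ i ∈ Finset.range ((n - 1).factorization 2),
        {x | x ^ (2 ^ i * oddPart (n - 1)) = -1} := by
    ext x
    simp [strongLiars]
  rw [strongLiarCount, Nat.card_coe_set_eq, hS]
  refine (Set.ncard_union_le _ _).trans
    (add_le_add ?_ ((Finset.set_ncard_biUnion_le _ _).trans ?_)) <;>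
  simp [powEqCount_eq_ncard]

theorem Nat.modEq_one_of_forall_prime_modEq_one {n d : ℕ} (hn : n ≠ 0)
    (h : ∀ p, p.Prime → p ∣ n → p ≡ 1 [MOD d]) : n ≡ 1 [MOD d] := by
  induction n using Nat.recOnMul with
  | zero => exact absurd rfl hn
  | one => rfl
  | prime p hp => exact h p hp dvd_rfl
  | mul a b iha ihb =>
    obtain ⟨ha, hb⟩ := mul_ne_zero_iff.mp hn
    simpa using (iha ha fun p hp hpa => h p hp (hpa.mul_right b)).mul
      (ihb hb fun p hp hpb => h p hp (hpb.mul_left a))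

theorem two_pow_pred_mul_geom_sum_le {r m : ℕ} (hr : 1 ≤ r) (hm : 1 ≤ m) :
    2 ^ (r - 1) * (1 + ∑ i ∈ Finset.range m, 2 ^ (i * r)) ≤ 2 ^ (r * m) := by
  induction m, hm using Nat.le_induction with
  | base => simp [← pow_succ, Nat.sub_add_cancel hr]
  | succ m hm ih =>
    have h2r : 2 ^ r = 2 ^ (r - 1) * 2 := by rw [← pow_succ, Nat.sub_add_cancel hr]
    have : 1 ≤ 2 ^ (r - 1) := Nat.one_le_two_pow
    rw [Finset.sum_range_succ, ← add_assoc, mul_add, mul_add_one, pow_add, mul_comm m r, h2r]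
    nlinarith [Nat.mul_le_mul_left (2 ^ (r * m)) this]

theorem Nat.gcd_mul_le_mul_gcd (a b m : ℕ) (ha : a ≠ 0) (hbm : b.gcd m ≠ 0) :
    (a * b).gcd m ≤ a * b.gcd m :=
  Nat.le_of_dvd (Nat.pos_of_ne_zero (mul_ne_zero ha hbm))
    ((Nat.dvd_gcd (Nat.gcd_dvd_left _ _) ((Nat.gcd_dvd_right _ _).mul_left a)).trans
      (Nat.gcd_mul_left a b m).dvd)

theorem strongLiarCount_le_geom_sum_mul_prod_gcd {n ν p₀ : ℕ} (hodd : Odd n)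
    (hp₀ : p₀ ∈ n.primeFactors) (hν : ¬ 2 ^ (ν + 1) ∣ p₀ - 1) :
    strongLiarCount n ≤ (1 + ∑ i ∈ Finset.range ν, 2 ^ (i * n.primeFactors.card)) *
      ∏ p ∈ n.primeFactors, (oddPart (n - 1)).gcd (p - 1) := by
  have hn : n ≠ 0 := (Nat.mem_primeFactors.mp hp₀).2.2
  have : NeZero n := ⟨hn⟩
  set t := oddPart (n - 1)
  set r := n.primeFactors.card
  set G := ∏ p ∈ n.primeFactors, t.gcd (p - 1)
  have htn : t.Coprime n := Nat.Coprime.coprime_dvd_left (Nat.ordCompl_dvd _ _)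
    ((Nat.coprime_self_sub_left (Nat.one_le_iff_ne_zero.mpr hn)).mpr (Nat.coprime_one_left n))
  have hbound (i : ℕ) : powEqCount n (2 ^ i * t) (-1) ≤ 2 ^ (i * r) * G := calc
    _ ≤ ∏ p ∈ n.primeFactors, (2 ^ i * t).gcd (p - 1) :=
      powEqCount_le_prod_gcd hn hodd ((Nat.coprime_two_left.mpr hodd).pow_left i |>.mul_left htn)
        isUnit_one.neg
    _ ≤ ∏ p ∈ n.primeFactors, 2 ^ i * t.gcd (p - 1) :=
      Finset.prod_le_prod' fun p hp => Nat.gcd_mul_le_mul_gcd _ _ _ (by positivity)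
        (Nat.gcd_pos_of_pos_right _
          (Nat.sub_pos_of_lt (Nat.prime_of_mem_primeFactors hp).one_lt)).ne'
    _ = 2 ^ (i * r) * G := by rw [Finset.prod_mul_distrib, Finset.prod_const, ← pow_mul]
  have hzero (i : ℕ) (hi : ν ≤ i) : powEqCount n (2 ^ i * t) (-1) = 0 :=
    powEqCount_neg_one_eq_zero hp₀ hodd fun h => hν ((pow_dvd_pow 2 (by omega)).trans h)
  set k := (n - 1).factorization 2
  have hsum : ∑ i ∈ Finset.range k, powEqCount n (2 ^ i * t) (-1) ≤
      ∑ i ∈ Finset.range ν, 2 ^ (i * r) * G := calc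
    _ ≤ ∑ i ∈ Finset.range (ν + k), powEqCount n (2 ^ i * t) (-1) :=
      Finset.sum_le_sum_of_subset (Finset.range_subset_range.mpr (Nat.le_add_left _ _))
    _ = ∑ i ∈ Finset.range ν, powEqCount n (2 ^ i * t) (-1) := by
      rw [Finset.sum_range_add, Finset.sum_eq_zero fun j _ => hzero _ (Nat.le_add_right _ _),
        add_zero]
    _ ≤ _ := Finset.sum_le_sum fun i _ => hbound i
  calc strongLiarCount n
      ≤ powEqCount n t 1 + ∑ i ∈ Finset.range k, powEqCount n (2 ^ i * t) (-1) :=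
        strongLiarCount_le_sum n
    _ ≤ G + ∑ i ∈ Finset.range ν, 2 ^ (i * r) * G :=
        add_le_add (powEqCount_le_prod_gcd hn hodd htn isUnit_one) hsum
    _ = _ := by rw [add_mul, one_mul, Finset.sum_mul]

theorem two_pow_mul_strongLiarCount_le_prod_gcd {n : ℕ} (hn : 1 < n) (hodd : Odd n) :
    2 ^ (n.primeFactors.card - 1) * strongLiarCount n ≤
      ∏ p ∈ n.primeFactors, (p - 1).gcd (n - 1) := by
  have hne : n.primeFactors.Nonempty := Nat.nonempty_primeFactors.mpr hn
  obtain ⟨p₀, hp₀, hmin⟩ :=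
    n.primeFactors.exists_min_image (fun p => (p - 1).factorization 2) hne
  set ν := (p₀ - 1).factorization 2
  set r := n.primeFactors.card
  set t := oddPart (n - 1)
  have hp_sub_one {p : ℕ} (hp : p ∈ n.primeFactors) : 2 ∣ p - 1 ∧ p - 1 ≠ 0 := by
    have hp' := Nat.prime_of_mem_primeFactors hp
    have hpodd := hp'.odd_of_ne_two (hodd.ne_two_of_dvd_nat (Nat.dvd_of_mem_primeFactors hp))
    exact ⟨(Nat.Odd.sub_odd hpodd odd_one).two_dvd, Nat.sub_ne_zero_of_lt hp'.one_lt⟩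
  have hν (p : ℕ) (hp : p ∈ n.primeFactors) : 2 ^ ν ∣ p - 1 :=
    (pow_dvd_pow 2 (hmin p hp)).trans (Nat.ordProj_dvd _ _)
  have hν1 : 1 ≤ ν :=
    (Nat.prime_two.dvd_iff_one_le_factorization (hp_sub_one hp₀).2).mp (hp_sub_one hp₀).1
  have hνn : 2 ^ ν ∣ n - 1 := by
    refine (Nat.modEq_iff_dvd' hn.le).mp
      (Nat.modEq_one_of_forall_prime_modEq_one (by omega) ?_).symm
    exact fun p hp hpn => ((Nat.modEq_iff_dvd' hp.one_le).mpr
      (hν p (Nat.mem_primeFactors.mpr ⟨hp, hpn, by omega⟩))).symm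
  have ht : Nat.Coprime 2 t := (Nat.prime_two.coprime_iff_not_dvd).mpr
    (Nat.not_dvd_ordCompl Nat.prime_two (by omega))
  have hdvd (p : ℕ) (hp : p ∈ n.primeFactors) :
      2 ^ ν * t.gcd (p - 1) ∣ (p - 1).gcd (n - 1) :=
    Nat.Coprime.mul_dvd_of_dvd_of_dvd ((ht.pow_left ν).coprime_dvd_right (Nat.gcd_dvd_left _ _))
      (Nat.dvd_gcd (hν p hp) hνn)
      (Nat.dvd_gcd (Nat.gcd_dvd_right _ _) ((Nat.gcd_dvd_left _ _).trans (Nat.ordCompl_dvd _ _)))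
  calc 2 ^ (r - 1) * strongLiarCount n
      ≤ 2 ^ (r - 1) * ((1 + ∑ i ∈ Finset.range ν, 2 ^ (i * r)) *
          ∏ p ∈ n.primeFactors, t.gcd (p - 1)) :=
        Nat.mul_le_mul_left _ (strongLiarCount_le_geom_sum_mul_prod_gcd hodd hp₀
          (Nat.pow_succ_factorization_not_dvd (hp_sub_one hp₀).2 Nat.prime_two))
    _ ≤ 2 ^ (r * ν) * ∏ p ∈ n.primeFactors, t.gcd (p - 1) := by
        rw [← mul_assoc]
        exact Nat.mul_le_mul_right _ (two_pow_pred_mul_geom_sum_le (Finset.card_pos.mpr hne) hν1)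
    _ = ∏ p ∈ n.primeFactors, 2 ^ ν * t.gcd (p - 1) := by
        rw [Finset.prod_mul_distrib, Finset.prod_const, ← pow_mul, mul_comm r]
    _ ≤ ∏ p ∈ n.primeFactors, (p - 1).gcd (n - 1) :=
        Finset.prod_le_prod' fun p hp =>
          Nat.le_of_dvd (Nat.gcd_pos_of_pos_left _ (Nat.pos_of_ne_zero (hp_sub_one hp).2))
            (hdvd p hp)

theorem Nat.sub_one_dvd_sub_one_of_dvd_mul_sub_one {p q : ℕ} (hp : p ≠ 0) (hq : q ≠ 0)
    (h : p - 1 ∣ p * q - 1) : p - 1 ∣ q - 1 := by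
  have hpq : p * q - 1 = (p - 1) * q + (q - 1) := by
    obtain ⟨p, rfl⟩ := Nat.exists_eq_succ_of_ne_zero hp
    obtain ⟨q, rfl⟩ := Nat.exists_eq_succ_of_ne_zero hq
    simp only [Nat.succ_sub_one, Nat.succ_mul, Nat.mul_succ]
    omega
  exact (Nat.dvd_add_right (dvd_mul_right _ _)).mp (hpq ▸ h)

theorem Nat.eq_one_of_totient_prime_pow_dvd_sub_one {p a : ℕ} (hp : p.Prime) (ha : a ≠ 0)
    (h : φ (p ^ a) ∣ p - 1) : a = 1 := by
  rw [Nat.totient_prime_pow hp (Nat.pos_of_ne_zero ha)] at h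
  have hle : p ^ (a - 1) * (p - 1) ≤ 1 * (p - 1) := by
    simpa using Nat.le_of_dvd (Nat.sub_pos_of_lt hp.one_lt) h
  have hpow := Nat.le_of_mul_le_mul_right hle (Nat.sub_pos_of_lt hp.one_lt)
  by_contra ha1
  exact hp.one_lt.not_ge ((Nat.pow_le_one_iff (by omega)).mp hpow)

theorem Nat.two_mul_le_of_dvd_of_ne {a b : ℕ} (hb : b ≠ 0) (h : a ∣ b) (hne : a ≠ b) :
    2 * a ≤ b := by
  obtain ⟨c, rfl⟩ := h
  have hc0 : c ≠ 0 := by rintro rfl; simp at hb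
  have hc1 : c ≠ 1 := by rintro rfl; simp at hne
  nlinarith [Nat.zero_le a, (by omega : 2 ≤ c)]

theorem four_mul_sub_one_le_totient_prime_pow {p e : ℕ} (hp : p.Prime) (hp2 : p ≠ 2)
    (he : 2 ≤ e) (h9 : p ^ e ≠ 9) : 4 * (p - 1) ≤ φ (p ^ e) := by
  rw [Nat.totient_prime_pow hp (by omega)]
  refine Nat.mul_le_mul_right _ ?_
  have hp3 : 3 ≤ p := lt_of_le_of_ne hp.two_le (Ne.symm hp2)
  rcases eq_or_ne p 3 with rfl | hp3'
  · have : 3 ≤ e := by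
      by_contra!
      exact h9 (by rw [show e = 2 by omega]; norm_num)
    calc 4 ≤ 3 ^ 2 := by norm_num
      _ ≤ 3 ^ (e - 1) := Nat.pow_le_pow_right (by norm_num) (by omega)
  · calc 4 ≤ p := by omega
      _ = p ^ 1 := (pow_one p).symm
      _ ≤ p ^ (e - 1) := Nat.pow_le_pow_right hp.pos (by omega)

theorem two_mul_gcd_mul_gcd_le_totient {n p q a b : ℕ} (hp : p.Prime) (hq : q.Prime)
    (hpq : p ≠ q) (ha : a ≠ 0) (hb : b ≠ 0) (hn : n = p ^ a * q ^ b) :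
    2 * ((p - 1).gcd (n - 1) * (q - 1).gcd (n - 1)) ≤ φ n := by
  set gp := (p - 1).gcd (n - 1)
  set gq := (q - 1).gcd (n - 1)
  have hφ : φ n = φ (p ^ a) * φ (q ^ b) :=
    hn ▸ Nat.totient_mul (((Nat.coprime_primes hp hq).mpr hpq).pow a b)
  have hgp : gp ∣ φ (p ^ a) := (Nat.gcd_dvd_left _ _).trans
    (Nat.totient_prime_pow hp (Nat.pos_of_ne_zero ha) ▸ dvd_mul_left _ _)
  have hgq : gq ∣ φ (q ^ b) := (Nat.gcd_dvd_left _ _).trans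
    (Nat.totient_prime_pow hq (Nat.pos_of_ne_zero hb) ▸ dvd_mul_left _ _)
  have hφp : φ (p ^ a) ≠ 0 := (Nat.totient_pos.mpr (pow_pos hp.pos a)).ne'
  have hφq : φ (q ^ b) ≠ 0 := (Nat.totient_pos.mpr (pow_pos hq.pos b)).ne'
  rw [hφ]
  by_cases hp1 : gp = φ (p ^ a)
  · by_cases hq1 : gq = φ (q ^ b)
    · exfalso
      obtain rfl := Nat.eq_one_of_totient_prime_pow_dvd_sub_one hp ha (hp1 ▸ Nat.gcd_dvd_left _ _)
      obtain rfl := Nat.eq_one_of_totient_prime_pow_dvd_sub_one hq hb (hq1 ▸ Nat.gcd_dvd_left _ _)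
      rw [pow_one, Nat.totient_prime hp] at hp1
      rw [pow_one, Nat.totient_prime hq] at hq1
      rw [pow_one, pow_one] at hn
      have hpn : p - 1 ∣ p * q - 1 := hn ▸ hp1 ▸ Nat.gcd_dvd_right _ _
      have hqn : q - 1 ∣ q * p - 1 := mul_comm p q ▸ hn ▸ hq1 ▸ Nat.gcd_dvd_right _ _
      have := Nat.dvd_antisymm
        (Nat.sub_one_dvd_sub_one_of_dvd_mul_sub_one hp.ne_zero hq.ne_zero hpn)
        (Nat.sub_one_dvd_sub_one_of_dvd_mul_sub_one hq.ne_zero hp.ne_zero hqn)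
      exact hpq (by have := hp.one_lt; have := hq.one_lt; omega)
    · calc 2 * (gp * gq) = gp * (2 * gq) := by ring
        _ ≤ φ (p ^ a) * φ (q ^ b) :=
          Nat.mul_le_mul (Nat.le_of_dvd (Nat.pos_of_ne_zero hφp) hgp)
            (Nat.two_mul_le_of_dvd_of_ne hφq hgq hq1)
  · calc 2 * (gp * gq) = 2 * gp * gq := by ring
      _ ≤ φ (p ^ a) * φ (q ^ b) :=
        Nat.mul_le_mul (Nat.two_mul_le_of_dvd_of_ne hφp hgp hp1)
          (Nat.le_of_dvd (Nat.pos_of_ne_zero hφq) hgq)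

theorem prod_gcd_le_totient {n : ℕ} (hn : n ≠ 0) :
    ∏ p ∈ n.primeFactors, (p - 1).gcd (n - 1) ≤ φ n :=
  Nat.le_of_dvd (Nat.totient_pos.mpr (Nat.pos_of_ne_zero hn))
    ((Finset.prod_dvd_prod_of_dvd _ _ fun _ _ => Nat.gcd_dvd_left _ _).trans
      (Dvd.intro_left _ (Nat.totient_eq_div_primeFactors_mul n).symm))

theorem four_mul_prod_gcd_le_two_pow_mul_totient {n : ℕ} (hn : 1 < n) (hodd : Odd n)
    (hcomp : ¬ n.Prime) (hn9 : n ≠ 9) :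
    4 * ∏ p ∈ n.primeFactors, (p - 1).gcd (n - 1) ≤ 2 ^ (n.primeFactors.card - 1) * φ n := by
  have hn0 : n ≠ 0 := by omega
  have hfac := Nat.prod_primeFactors_pow_factorization hn0
  have hpos : 0 < n.primeFactors.card := Finset.card_pos.mpr (Nat.nonempty_primeFactors.mpr hn)
  obtain hr | hr | hr : n.primeFactors.card = 1 ∨ n.primeFactors.card = 2 ∨
      3 ≤ n.primeFactors.card := by omega
  · obtain ⟨p, hP⟩ := Finset.card_eq_one.mp hr
    have hp : p.Prime := Nat.prime_of_mem_primeFactors (hP ▸ Finset.mem_singleton_self p)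
    rw [hP, Finset.prod_singleton] at hfac
    have he : 2 ≤ n.factorization p := by
      by_contra! he
      interval_cases h : n.factorization p
      · simp at hfac; omega
      · exact hcomp (by rwa [hfac, pow_one])
    rw [hr, hP, Finset.prod_singleton, pow_zero, one_mul, hfac]
    calc 4 * (p - 1).gcd (p ^ n.factorization p - 1)
        ≤ 4 * (p - 1) := Nat.mul_le_mul_left 4 (Nat.gcd_le_left _ (Nat.sub_pos_of_lt hp.one_lt))
      _ ≤ φ (p ^ n.factorization p) := four_mul_sub_one_le_totient_prime_pow hp
          (hodd.ne_two_of_dvd_nat (hfac ▸ dvd_pow_self p (by omega))) he (hfac ▸ hn9)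
  · obtain ⟨p, q, hpq, hP⟩ := Finset.card_eq_two.mp hr
    have hp : p ∈ n.primeFactors := hP ▸ Finset.mem_insert_self p {q}
    have hq : q ∈ n.primeFactors := hP ▸ Finset.mem_insert_of_mem (Finset.mem_singleton_self q)
    rw [hP, Finset.prod_pair hpq] at hfac
    have hexp {p : ℕ} (hp : p ∈ n.primeFactors) : n.factorization p ≠ 0 :=
      ((Nat.prime_of_mem_primeFactors hp).factorization_pos_of_dvd hn0
        (Nat.dvd_of_mem_primeFactors hp)).ne'
    rw [hr, hP, Finset.prod_pair hpq]
    have := two_mul_gcd_mul_gcd_le_totient (Nat.prime_of_mem_primeFactors hp)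
      (Nat.prime_of_mem_primeFactors hq) hpq (hexp hp) (hexp hq) hfac
    omega
  · calc 4 * ∏ p ∈ n.primeFactors, (p - 1).gcd (n - 1)
        ≤ 2 ^ (n.primeFactors.card - 1) * ∏ p ∈ n.primeFactors, (p - 1).gcd (n - 1) := by
          gcongr
          calc 4 = 2 ^ 2 := by norm_num
            _ ≤ _ := Nat.pow_le_pow_right (by norm_num) (by omega)
      _ ≤ 2 ^ (n.primeFactors.card - 1) * φ n := by gcongr; exact prod_gcd_le_totient hn0

/-- If `n > 9` is odd and composite then `|S(n)| ≤ φ(n)/4`. -/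
theorem strongLiarCount_le_totient_div_four (n : ℕ) (hn : 9 < n) (hodd : Odd n)
    (hcomp : ¬ n.Prime) : 4 * strongLiarCount n ≤ n.totient := by
  have h₁ := two_pow_mul_strongLiarCount_le_prod_gcd (by omega : 1 < n) hodd
  have h₂ := four_mul_prod_gcd_le_two_pow_mul_totient (by omega) hodd hcomp (by omega)
  refine Nat.le_of_mul_le_mul_left ?_ (pow_pos two_pos (n.primeFactors.card - 1))
  calc 2 ^ (n.primeFactors.card - 1) * (4 * strongLiarCount n)
      = 4 * (2 ^ (n.primeFactors.card - 1) * strongLiarCount n) := by ring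
    _ ≤ 4 * ∏ p ∈ n.primeFactors, (p - 1).gcd (n - 1) := Nat.mul_le_mul_left 4 h₁
    _ ≤ 2 ^ (n.primeFactors.card - 1) * φ n := h₂
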